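/- Under the conditions of the eow-marking prefix-probability equivalence, the conditional probability of word w_t given context w_{<t} satisfies: p(w_t | w_{<t}) = ∏_{i=1}^{|s|} q(s_i | T(w_{<t}) ∘ s_{<i}), where s = τ(w_t) and q(v | x) denotes the conditional next-subword probability P_q(x ∘ v ∘ V*)/P_q(x ∘ V*), assuming all prefix probabilities are positive. -/

import Mathlib

open scoped ENNReal BigOperators

/-- Prefix probability of a sequence under a distribution over sequences. -/
noncomputable def prefP {A : Type*} (p : List A → ℝ≥0∞) (s : List A) : ℝ≥0∞ :=
  ∑' y : {y : List A // s <+: y}, p y.val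

/-- Conditional next-symbol probability. -/
noncomputable def condP {A : Type*} (p : List A → ℝ≥0∞) (v : A) (s : List A) : ℝ≥0∞ :=
  prefP p (s ++ [v]) / prefP p s

/-!
A word `w` is tokenised into `τ w`, so a text `u` becomes `T u = (u.map τ).flatten` and `q` is the
pushforward of `p` along `T`. Since every `τ w` ends in its unique end-of-word symbol, the image of
`τ` is a prefix code, hence `T w <+: T u ↔ w <+: u` and `P_q (T w ∘ V*) = P_p (w ∘ L*)`. The product
of the conditional subword probabilities telescopes to `P_q (T w_{<t} ∘ τ w_t ∘ V*) / P_q (T w_{<t} ∘ V*)`,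
which is therefore `P_p (w_{<t} ∘ w_t ∘ L*) / P_p (w_{<t} ∘ L*)`.
-/

lemma ENNReal.prod_range_div (f : ℕ → ℝ≥0∞) (n : ℕ)
    (h0 : ∀ i ≤ n, f i ≠ 0) (htop : ∀ i ≤ n, f i ≠ ∞) :
    ∏ i ∈ Finset.range n, f (i + 1) / f i = f n / f 0 := by
  induction n with
  | zero => simp [ENNReal.div_self (h0 0 le_rfl) (htop 0 le_rfl)]
  | succ n ih =>
    rw [Finset.prod_range_succ,
      ih (fun i hi => h0 i (hi.trans n.le_succ)) (fun i hi => htop i (hi.trans n.le_succ)),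
      mul_comm, ← mul_div_assoc,
      ENNReal.div_mul_cancel (h0 n n.le_succ) (htop n n.le_succ)]

section PrefixProbability

variable {A B : Type*}

lemma prefP_eq_tsum_indicator (p : List A → ℝ≥0∞) (s : List A) :
    prefP p s = ∑' y, {y | s <+: y}.indicator p y :=
  tsum_subtype {y | s <+: y} p

lemma prod_condP_eq_div (q : List B → ℝ≥0∞) (x s : List B)
    (hpos : ∀ t, t <+: s → prefP q (x ++ t) ≠ 0) (hfin : ∀ t, t <+: s → prefP q (x ++ t) ≠ ∞) :
    ∏ i : Fin s.length, condP q (s.get i) (x ++ s.take i) = prefP q (x ++ s) / prefP q x := by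
  set f : ℕ → ℝ≥0∞ := fun i => prefP q (x ++ s.take i)
  have hcond : ∀ i : Fin s.length, condP q (s.get i) (x ++ s.take i) = f (i + 1) / f i := by
    intro i
    simp only [condP, f, List.append_assoc, List.get_eq_getElem, List.take_concat_get']
  simp_rw [hcond]
  rw [Fin.prod_univ_eq_prod_range (fun i => f (i + 1) / f i),
    ENNReal.prod_range_div f _ (fun i _ => hpos _ (List.take_prefix i s))
      (fun i _ => hfin _ (List.take_prefix i s))]
  simp [f]

variable [DecidableEq B] (f : List A → List B) {p : List A → ℝ≥0∞} {q : List B → ℝ≥0∞}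

lemma prefP_pushforward (hq : ∀ x, q x = ∑' u, p u * if x = f u then 1 else 0) (s : List B) :
    prefP q s = ∑' u, {u | s <+: f u}.indicator p u := by
  simp only [prefP, hq]
  rw [ENNReal.tsum_comm]
  refine tsum_congr fun u => ?_
  by_cases hs : s <+: f u
  · rw [tsum_eq_single ⟨f u, hs⟩ fun y hy => by simp [Subtype.ext_iff.not.mp hy]]
    simp [hs]
  · have hne : ∀ y : {y // s <+: y}, y.val ≠ f u := fun y hy => hs (hy ▸ y.property)
    simp [hs, hne]

lemma prefP_pushforward_ne_top (hq : ∀ x, q x = ∑' u, p u * if x = f u then 1 else 0)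
    (hp : ∑' u, p u ≠ ∞) (s : List B) : prefP q s ≠ ∞ := by
  rw [prefP_pushforward f hq]
  exact ne_top_of_le_ne_top hp (ENNReal.tsum_le_tsum fun u => Set.indicator_le_self _ _ u)

lemma prefP_pushforward_apply (hq : ∀ x, q x = ∑' u, p u * if x = f u then 1 else 0)
    (hf : ∀ w u, f w <+: f u ↔ w <+: u) (w : List A) : prefP q (f w) = prefP p w := by
  simp only [prefP_pushforward f hq, prefP_eq_tsum_indicator, hf]

end PrefixProbability

section PrefixCode

variable {L V : Type*} {τ : L → List V}

lemma eq_of_prefix_of_eow_marking {Vmid Veow : Set V} (hdisj : Disjoint Vmid Veow)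
    (hshape : ∀ w : L, ∃ (m : List V) (e : V), (∀ a ∈ m, a ∈ Vmid) ∧ e ∈ Veow ∧ τ w = m ++ [e])
    {a b : L} (hab : τ a <+: τ b) : τ a = τ b := by
  obtain ⟨ma, ea, -, hea, hta⟩ := hshape a
  obtain ⟨mb, eb, hmb, -, htb⟩ := hshape b
  rw [htb] at hab ⊢
  refine (List.prefix_concat_iff.mp hab).resolve_right fun hprefix => ?_
  have hmem : ea ∈ mb := hprefix.subset (hta ▸ List.mem_concat_self)
  exact Set.disjoint_left.mp hdisj (hmb ea hmem) hea

lemma flatten_map_prefix_flatten_map_iff (hne : ∀ a, τ a ≠ [])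
    (hcode : ∀ a b, τ a <+: τ b → a = b) {w u : List L} :
    (w.map τ).flatten <+: (u.map τ).flatten ↔ w <+: u := by
  refine ⟨fun h => ?_, fun h => (h.map τ).flatten⟩
  induction w generalizing u with
  | nil => exact List.nil_prefix
  | cons a w ih =>
    cases u with
    | nil =>
      simp only [List.map_cons, List.flatten_cons, List.map_nil, List.flatten_nil,
        List.prefix_nil, List.append_eq_nil_iff] at h
      exact absurd h.1 (hne a)
    | cons b u =>
      simp only [List.map_cons, List.flatten_cons] at h
      have hab : a = b := by
        rcases List.prefix_or_prefix_of_prefix ((List.prefix_append _ _).trans h)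
          (List.prefix_append (τ b) _) with h' | h'
        · exact hcode a b h'
        · exact (hcode b a h').symm
      subst hab
      exact List.cons_prefix_cons.mpr ⟨rfl, ih ((List.prefix_append_right_inj _).mp h)⟩

end PrefixCode

theorem stmt_8_general {L V : Type*} [DecidableEq V] (Vmid Veow : Set V)
    (hdisj : Disjoint Vmid Veow)
    (τ : L → List V) (hτ : Function.Injective τ)
    (hshape : ∀ w : L, ∃ (m : List V) (e : V),
      (∀ a ∈ m, a ∈ Vmid) ∧ e ∈ Veow ∧ τ w = m ++ [e])
    (p : List L → ℝ≥0∞) (hp : ∑' u : List L, p u = 1)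
    (q : List V → ℝ≥0∞)
    (hq : ∀ x : List V, q x = ∑' u : List L, p u * (if x = (u.map τ).flatten then 1 else 0))
    (wlt : List L) (wt : L)
    (hposq : ∀ s : List V, s <+: τ wt → prefP q ((wlt.map τ).flatten ++ s) ≠ 0) :
    prefP p (wlt ++ [wt]) / prefP p wlt =
      ∏ i : Fin (τ wt).length,
        condP q ((τ wt).get i) ((wlt.map τ).flatten ++ (τ wt).take i) := by
  set T : List L → List V := fun u => (u.map τ).flatten
  have hne : ∀ a, τ a ≠ [] := fun a => by
    obtain ⟨m, e, -, -, h⟩ := hshape a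
    simp [h]
  have hT : ∀ w u, T w <+: T u ↔ w <+: u := fun w u =>
    flatten_map_prefix_flatten_map_iff hne
      (fun a b h => hτ (eq_of_prefix_of_eow_marking hdisj hshape h))
  have hfin := prefP_pushforward_ne_top T hq (hp ▸ ENNReal.one_ne_top)
  rw [prod_condP_eq_div q _ _ hposq fun t _ => hfin _,
    ← prefP_pushforward_apply T hq hT, ← prefP_pushforward_apply T hq hT]
  simp [T]

theorem stmt_8 {L V : Type*} [Countable L] [Countable V] [DecidableEq V] (Vmid Veow : Set V)
    (hdisj : Disjoint Vmid Veow) (hcover : Vmid ∪ Veow = Set.univ)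
    (τ : L → List V) (hτ : Function.Injective τ)
    (hshape : ∀ w : L, ∃ (m : List V) (e : V),
      (∀ a ∈ m, a ∈ Vmid) ∧ e ∈ Veow ∧ τ w = m ++ [e])
    (p : List L → ℝ≥0∞) (hp : ∑' u : List L, p u = 1)
    (q : List V → ℝ≥0∞)
    (hq : ∀ x : List V, q x = ∑' u : List L, p u * (if x = (u.map τ).flatten then 1 else 0))
    (wlt : List L) (wt : L)
    (hposw : prefP p wlt ≠ 0)
    (hposq : ∀ s : List V, s <+: τ wt → prefP q ((wlt.map τ).flatten ++ s) ≠ 0) :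
    prefP p (wlt ++ [wt]) / prefP p wlt =
      ∏ i : Fin (τ wt).length,
        condP q ((τ wt).get i) ((wlt.map τ).flatten ++ (τ wt).take i) :=
  stmt_8_general Vmid Veow hdisj τ hτ hshape p hp q hq wlt wt hposq
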